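/- arXiv:2205.06654 — 2 statements merged into one kernel-verified Lean document; each statement's English description precedes it below -/
import Mathlib

section
/- Let ψ : (0,∞) → (0,∞), γ a Borel measure on [0,∞) with γ({0}) = 0, q > 0, and define m_q = Σ_{k≥0} q^k T^k(δ_0) with T(μ) = (1/ψ)·(μ ⋆ γ). If ν is a Borel measure on [0,∞) with ν({0}) = 1 satisfying ψ·ν = q·(γ + γ ⋆ (ν − δ_0)) on (0,∞) (equivalently ψ·(ν − δ_0) = q·(γ ⋆ ν) on (0,∞)), then ν ≥ m_q, i.e. ν(E) ≥ m_q(E) for every Borel set E ⊆ [0,∞). -/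
open MeasureTheory Set Real

/-- Convolution of two measures on ℝ: pushforward of the product along addition. -/
noncomputable def mconv (μ ν : MeasureTheory.Measure ℝ) : MeasureTheory.Measure ℝ :=
  MeasureTheory.Measure.map (fun p : ℝ × ℝ => p.1 + p.2) (μ.prod ν)

/-- The operator `μ ↦ (1/ψ)·(μ ⋆ γ)`. -/
noncomputable def convStep (ψ : ℝ → ℝ) (γ : MeasureTheory.Measure ℝ)
    (μ : MeasureTheory.Measure ℝ) : MeasureTheory.Measure ℝ :=
  (mconv μ γ).withDensity (fun x => ENNReal.ofReal (ψ x)⁻¹)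

/-- The measure `m_q = Σ_k q^k T^k(δ_0)` where `T(μ) = (1/ψ)·(μ ⋆ γ)`. -/
noncomputable def mq (ψ : ℝ → ℝ) (γ : MeasureTheory.Measure ℝ) (q : ℝ) :
    MeasureTheory.Measure ℝ :=
  MeasureTheory.Measure.sum (fun k : ℕ =>
    ENNReal.ofReal (q ^ k) • (convStep ψ γ)^[k] (MeasureTheory.Measure.dirac 0))

/-!
Write `Φ μ = δ₀ + q • T μ`. Since `T` is additive and `ℝ≥0∞`-homogeneous, the `n`-th partial sum
of the series defining `m_q` is `Φⁿ 0`; as `Φ` is monotone, it suffices that `ν` is a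
supersolution, `Φ ν ≤ ν`. Because `ν` lives on `[0, ∞)` and `γ` on `(0, ∞)`, `T ν` lives on
`(0, ∞)`, where the equation turns `q • T ν` into `ψ⁻¹ • (ψ • ν) ≤ ν`; the remaining term `δ₀` is
the atom of `ν` at `0`.
-/

open scoped ENNReal

section WithDensity

variable {α : Type*} [MeasurableSpace α]

theorem withDensity_mono_measure {μ ν : Measure α} (h : μ ≤ ν) (f : α → ℝ≥0∞) :
    μ.withDensity f ≤ ν.withDensity f := by
  refine Measure.le_iff.2 fun s hs => ?_
  rw [withDensity_apply _ hs, withDensity_apply _ hs]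
  exact lintegral_mono' (Measure.restrict_mono subset_rfl h) le_rfl

theorem withDensity_withDensity_le (μ : Measure α) [SFinite μ] (f g : α → ℝ≥0∞) :
    (μ.withDensity f).withDensity g ≤ μ.withDensity (f * g) := by
  obtain ⟨f', hf', hf'_le, hf'_eq⟩ := exists_measurable_le_withDensity_eq μ f
  obtain ⟨g', hg', hg'_le, hg'_eq⟩ := exists_measurable_le_withDensity_eq (μ.withDensity f') g
  rw [← hf'_eq, ← hg'_eq, ← withDensity_mul μ hf' hg']
  exact withDensity_mono (ae_of_all _ fun a => mul_le_mul' (hf'_le a) (hg'_le a))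

theorem withDensity_withDensity_le_self (μ : Measure α) [SFinite μ] {f g : α → ℝ≥0∞}
    (hfg : ∀ a, f a * g a ≤ 1) : (μ.withDensity f).withDensity g ≤ μ :=
  calc (μ.withDensity f).withDensity g ≤ μ.withDensity (f * g) := withDensity_withDensity_le μ f g
    _ ≤ μ.withDensity 1 := withDensity_mono (ae_of_all _ hfg)
    _ = μ := withDensity_one

end WithDensity

theorem ENNReal.ofReal_mul_ofReal_inv_le_one (a : ℝ) :
    ENNReal.ofReal a * ENNReal.ofReal a⁻¹ ≤ 1 := by
  rcases le_or_gt a 0 with ha | ha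
  · simp [ENNReal.ofReal_of_nonpos ha]
  · rw [← ENNReal.ofReal_mul ha.le, mul_inv_cancel₀ ha.ne', ENNReal.ofReal_one]

theorem mconv_apply (μ γ : Measure ℝ) [SFinite γ] {E : Set ℝ} (hE : MeasurableSet E) :
    mconv μ γ E = ∫⁻ x, γ ((x + ·) ⁻¹' E) ∂μ := by
  rw [mconv, Measure.map_apply measurable_add hE, Measure.prod_apply (measurable_add hE)]
  rfl

theorem mconv_comm (μ ν : Measure ℝ) [SFinite μ] [SFinite ν] : mconv μ ν = mconv ν μ :=
  Measure.conv_comm μ ν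

theorem mconv_mono_left {μ μ' γ : Measure ℝ} [SFinite γ] (h : μ ≤ μ') : mconv μ γ ≤ mconv μ' γ :=
  Measure.map_mono (Measure.prod_mono h le_rfl) measurable_add

theorem mconv_add_left (μ μ' γ : Measure ℝ) [SFinite γ] :
    mconv (μ + μ') γ = mconv μ γ + mconv μ' γ := by
  ext E hE
  rw [Measure.add_apply, mconv_apply _ _ hE, mconv_apply _ _ hE, mconv_apply _ _ hE,
    lintegral_add_measure]

theorem mconv_smul_left (c : ℝ≥0∞) (μ γ : Measure ℝ) [SFinite γ] :
    mconv (c • μ) γ = c • mconv μ γ :=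
  Measure.conv_smul_left μ γ c

theorem ae_pos_mconv {μ γ : Measure ℝ} [SFinite γ] (hμ : ∀ᵐ x ∂μ, 0 ≤ x)
    (hγ : ∀ᵐ y ∂γ, 0 < y) : ∀ᵐ z ∂mconv μ γ, 0 < z := by
  rw [mconv, ae_map_iff measurable_add.aemeasurable measurableSet_Ioi]
  filter_upwards [Measure.quasiMeasurePreserving_fst.ae hμ,
    Measure.quasiMeasurePreserving_snd.ae hγ] with p h₁ h₂
  exact add_pos_of_nonneg_of_pos h₁ h₂

noncomputable def mqPartial (ψ : ℝ → ℝ) (γ : Measure ℝ) (q : ℝ) (n : ℕ) : Measure ℝ :=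
  ∑ k ∈ Finset.range n, ENNReal.ofReal (q ^ k) • (convStep ψ γ)^[k] (Measure.dirac 0)

theorem mq_apply_eq_iSup_mqPartial (ψ : ℝ → ℝ) (γ : Measure ℝ) (q : ℝ) {E : Set ℝ}
    (hE : MeasurableSet E) :
    mq ψ γ q E = ⨆ n, mqPartial ψ γ q n E := by
  simp only [mq, mqPartial, Measure.sum_apply _ hE, Measure.finsetSum_apply]
  exact ENNReal.tsum_eq_iSup_nat

section ConvStep

variable (ψ : ℝ → ℝ) (γ : Measure ℝ) [SFinite γ]

theorem convStep_mono {μ μ' : Measure ℝ} (h : μ ≤ μ') : convStep ψ γ μ ≤ convStep ψ γ μ' :=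
  withDensity_mono_measure (mconv_mono_left h) _

noncomputable def convStepLinearMap : Measure ℝ →ₗ[ℝ≥0∞] Measure ℝ where
  toFun := convStep ψ γ
  map_add' μ μ' := by rw [convStep, mconv_add_left, withDensity_add_measure]; rfl
  map_smul' c μ := by rw [convStep, mconv_smul_left, withDensity_smul_measure]; rfl

theorem mqPartial_succ {q : ℝ} (hq : 0 ≤ q) (n : ℕ) :
    mqPartial ψ γ q (n + 1) =
      Measure.dirac 0 + ENNReal.ofReal q • convStep ψ γ (mqPartial ψ γ q n) := by
  have hsum := map_sum (convStepLinearMap ψ γ)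
    (fun k => ENNReal.ofReal (q ^ k) • (convStep ψ γ)^[k] (Measure.dirac 0)) (Finset.range n)
  simp only [convStepLinearMap, LinearMap.coe_mk, AddHom.coe_mk, map_smul] at hsum
  rw [mqPartial, mqPartial, Finset.sum_range_succ', hsum, Finset.smul_sum, add_comm]
  simp only [pow_zero, ENNReal.ofReal_one, one_smul, Function.iterate_zero_apply]
  congr 1
  refine Finset.sum_congr rfl fun k _ => ?_
  rw [Function.iterate_succ_apply', smul_smul, ← ENNReal.ofReal_mul hq, ← pow_succ']

end ConvStep

theorem mqPartial_le_of_supersolution (ψ : ℝ → ℝ) (γ : Measure ℝ) [SFinite γ] {q : ℝ}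
    (hq : 0 ≤ q) {ν : Measure ℝ}
    (hν : Measure.dirac 0 + ENNReal.ofReal q • convStep ψ γ ν ≤ ν) (n : ℕ) :
    mqPartial ψ γ q n ≤ ν := by
  induction n with
  | zero => exact (Measure.zero_le ν).trans_eq' (by simp [mqPartial])
  | succ n ih =>
    rw [mqPartial_succ ψ γ hq]
    refine le_trans ?_ hν
    gcongr
    exact convStep_mono ψ γ ih

theorem mq_le_of_supersolution (ψ : ℝ → ℝ) (γ : Measure ℝ) [SFinite γ] {q : ℝ}
    (hq : 0 ≤ q) {ν : Measure ℝ}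
    (hν : Measure.dirac 0 + ENNReal.ofReal q • convStep ψ γ ν ≤ ν) : mq ψ γ q ≤ ν :=
  Measure.le_iff.2 fun E hE => by
    rw [mq_apply_eq_iSup_mqPartial ψ γ q hE]
    exact iSup_le fun n => Measure.le_iff.1 (mqPartial_le_of_supersolution ψ γ hq hν n) E hE

theorem dirac_add_smul_convStep_le (ψ : ℝ → ℝ) (γ ν : Measure ℝ) [SFinite γ] [SFinite ν]
    (q : ℝ) (hγ0 : γ {0} = 0) (hγc : γ (Set.Iio 0) = 0) (hνc : ν (Set.Iio 0) = 0)
    (hν0 : ν {0} = 1)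
    (heq : (ν.withDensity (fun x => ENNReal.ofReal (ψ x))).restrict (Set.Ioi 0) =
      (ENNReal.ofReal q • mconv γ ν).restrict (Set.Ioi 0)) :
    Measure.dirac 0 + ENNReal.ofReal q • convStep ψ γ ν ≤ ν := by
  have hγ_pos : ∀ᵐ y ∂γ, 0 < y := by
    have : γ (Iic 0) = 0 := by rw [← Iio_union_right]; exact measure_union_null hγc hγ0
    filter_upwards [measure_eq_zero_iff_ae_notMem.1 this] with y hy using not_le.1 hy
  have hν_nonneg : ∀ᵐ x ∂ν, 0 ≤ x := by
    filter_upwards [measure_eq_zero_iff_ae_notMem.1 hνc] with x hx using not_lt.1 hx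
  have hconv : (ENNReal.ofReal q • mconv γ ν).restrict (Ioi 0) = ENNReal.ofReal q • mconv ν γ := by
    rw [mconv_comm γ ν, Measure.restrict_smul,
      Measure.restrict_eq_self_of_ae_mem (s := Ioi 0) (ae_pos_mconv hν_nonneg hγ_pos)]
  have hpos : ENNReal.ofReal q • convStep ψ γ ν ≤ ν.restrict (Ioi 0) :=
    calc ENNReal.ofReal q • convStep ψ γ ν
        = ((ν.withDensity fun x => ENNReal.ofReal (ψ x)).restrict (Ioi 0)).withDensity
            fun x => ENNReal.ofReal (ψ x)⁻¹ := by
          rw [heq, hconv, convStep, withDensity_smul_measure]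
      _ = ((ν.withDensity fun x => ENNReal.ofReal (ψ x)).withDensity
            fun x => ENNReal.ofReal (ψ x)⁻¹).restrict (Ioi 0) :=
          (restrict_withDensity measurableSet_Ioi _).symm
      _ ≤ ν.restrict (Ioi 0) := Measure.restrict_mono subset_rfl <|
          withDensity_withDensity_le_self ν fun x => ENNReal.ofReal_mul_ofReal_inv_le_one (ψ x)
  have hatom : Measure.dirac 0 = ν.restrict {0} := by
    rw [Measure.restrict_singleton, hν0, one_smul]
  calc _ ≤ ν.restrict {0} + ν.restrict (Ioi 0) := hatom ▸ add_le_add_right hpos _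
    _ = ν.restrict ({0} ∪ Ioi 0) := (Measure.restrict_union (by simp) measurableSet_Ioi).symm
    _ ≤ ν := Measure.restrict_le_self

theorem mq_le_of_solution_general (ψ : ℝ → ℝ) (γ ν : Measure ℝ) [SFinite γ] [SFinite ν]
    (q : ℝ) (hq : 0 < q)
    (hγ0 : γ {0} = 0) (hγc : γ (Set.Iio 0) = 0) (hνc : ν (Set.Iio 0) = 0)
    (hν0 : ν {0} = 1)
    (heq : (ν.withDensity (fun x => ENNReal.ofReal (ψ x))).restrict (Set.Ioi 0) =
      (ENNReal.ofReal q • mconv γ ν).restrict (Set.Ioi 0)) :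
    ∀ E : Set ℝ, MeasurableSet E → mq ψ γ q E ≤ ν E :=
  Measure.le_iff.1 <| mq_le_of_supersolution ψ γ hq.le <|
    dirac_add_smul_convStep_le ψ γ ν q hγ0 hγc hνc hν0 heq

/-- Any measure `ν` with unit atom at `0` solving `ψ·ν = q·(γ⋆ν)` on `(0,∞)`
dominates `m_q`. -/
theorem mq_le_of_solution (ψ : ℝ → ℝ) (γ ν : Measure ℝ) [SFinite γ] [SFinite ν]
    (q : ℝ) (hq : 0 < q) (hψ : ∀ x > (0 : ℝ), 0 < ψ x)
    (hγ0 : γ {0} = 0) (hγc : γ (Set.Iio 0) = 0) (hνc : ν (Set.Iio 0) = 0)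
    (hν0 : ν {0} = 1)
    (heq : (ν.withDensity (fun x => ENNReal.ofReal (ψ x))).restrict (Set.Ioi 0) =
      (ENNReal.ofReal q • mconv γ ν).restrict (Set.Ioi 0)) :
    ∀ E : Set ℝ, MeasurableSet E → mq ψ γ q E ≤ ν E :=
  mq_le_of_solution_general ψ γ ν q hq hγ0 hγc hνc hν0 heq
end

section
/- Let ν and λ be Borel measures on [0,∞) such that ν is carried by (c, ∞) for some c ≥ 0 and the equation f·ν = λ ⋆ ν holds for a measurable f : [0,∞) → (0,∞), where λ is Lebesgue measure on [0,∞). Then ν is absolutely continuous with respect to Lebesgue measure. -/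
open MeasureTheory Set Real

/-! Since `f > 0` on the support of `ν`, the identity `f·ν = λ ⋆ ν` gives `ν ≪ λ ⋆ ν`; and
`λ ⋆ ν ≪ Leb` because Lebesgue measure is translation invariant, so every Lebesgue-null set
has null translates and hence is `λ ⋆ ν`-null. -/

lemma mconv_absolutelyContinuous_volume {μ ν : Measure ℝ} [SFinite μ] [SFinite ν]
    (hμ : μ ≪ volume) : mconv μ ν ≪ volume := by
  change μ ∗ ν ≪ volume
  rw [Measure.conv_comm]
  exact Measure.conv_absolutelyContinuous hμ

lemma ae_lt_of_measure_Iic_eq_zero {μ : Measure ℝ} {c : ℝ} (h : μ (Iic c) = 0) :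
    ∀ᵐ x ∂μ, c < x :=
  ae_iff.2 (measure_mono_null (fun _ hx => not_lt.1 hx) h)

/-- If `ν` is carried by `(c,∞)` and satisfies `f·ν = λ ⋆ ν` with `λ` Lebesgue
measure on `[0,∞)` and `f > 0`, then `ν` is absolutely continuous with respect to
Lebesgue measure. -/
theorem absolutely_continuous_of_conv_eq (ν : Measure ℝ) [SigmaFinite ν]
    (c : ℝ) (hc : 0 ≤ c) (hν : ν (Set.Iic c) = 0)
    (f : ℝ → ℝ) (hfm : Measurable f) (hf : ∀ x ≥ (0 : ℝ), 0 < f x)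
    (heq : ν.withDensity (fun x => ENNReal.ofReal (f x)) =
      mconv (MeasureTheory.volume.restrict (Set.Ici 0)) ν) :
    ν ≪ (MeasureTheory.volume : Measure ℝ) := by
  have hdensity_ne_zero : ∀ᵐ x ∂ν, ENNReal.ofReal (f x) ≠ 0 := by
    filter_upwards [ae_lt_of_measure_Iic_eq_zero hν] with x hx
    exact (ENNReal.ofReal_pos.2 (hf x (hc.trans hx.le))).ne'
  have hν_ac : ν ≪ ν.withDensity fun x => ENNReal.ofReal (f x) :=
    withDensity_absolutelyContinuous' hfm.ennreal_ofReal.aemeasurable hdensity_ne_zero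
  have hconv_ac : mconv (volume.restrict (Ici 0)) ν ≪ volume :=
    mconv_absolutelyContinuous_volume Measure.restrict_le_self.absolutelyContinuous
  exact (heq ▸ hν_ac).trans hconv_ac
end
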